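/- Every finite R-trivial monoid is a weakly ordered monoid: taking L to be the set of left ideals generated by idempotents ordered by reverse inclusion, C(x) = Sx^ω, and D(u) = C(e) for e a maximal element of {s : us = u}, the four axioms of a weakly ordered monoid hold. -/

import Mathlib

/-!
R-triviality turns `a * b * w = a` into `a * b = a`, so `a * q ^ n = a` with `n > 0` already
forces `a * q = a`. Since `S p ⊆ S e` means `p * e = p` for an idempotent `e`, the inclusion
`S p ⊆ C x` says exactly that `x` stabilises `p` on the right, and all four axioms become
statements about right stabilisers: `(u v)^ω` is stabilised by `u v`, hence by `u` and then by
`v`; and the maximal element `E u` of the stabiliser of `u` is idempotent and is stabilised by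
every `v` that stabilises `u`.
-/

section

variable {M : Type*} [Monoid M]

def IsRTrivial (M : Type*) [Monoid M] : Prop :=
  ∀ a b : M, {z : M | ∃ s : M, a * s = z} = {z : M | ∃ s : M, b * s = z} → a = b

theorem mul_pow_eq_self_of_mul_eq {a q : M} (h : a * q = a) (n : ℕ) : a * q ^ n = a := by
  induction n with
  | zero => rw [pow_zero, mul_one]
  | succ n ih => rw [pow_succ, ← mul_assoc, ih, h]

theorem setOf_mul_subset_iff {p q : M} (hq : IsIdempotentElem q) :
    {z : M | ∃ s : M, s * p = z} ⊆ {z : M | ∃ s : M, s * q = z} ↔ p * q = p := by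
  constructor
  · intro h
    obtain ⟨s, hs⟩ := h ⟨1, one_mul p⟩
    rw [← hs, mul_assoc, hq.eq]
  · rintro h z ⟨s, rfl⟩
    exact ⟨s * p, by rw [mul_assoc, h]⟩

theorem isIdempotentElem_of_maximal {u e : M} (he : u * e = u)
    (hmax : ∀ s : M, u * s = u → (∃ w : M, e * w = s) → e = s) : IsIdempotentElem e :=
  (hmax (e * e) (by rw [← mul_assoc, he, he]) ⟨e, rfl⟩).symm

theorem mul_eq_of_maximal {u e v : M} (he : u * e = u)
    (hmax : ∀ s : M, u * s = u → (∃ w : M, e * w = s) → e = s) (h : u * v = u) :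
    e * v = e :=
  (hmax (e * v) (by rw [← mul_assoc, he, h]) ⟨v, rfl⟩).symm

namespace IsRTrivial

theorem mul_eq_of_mul_mul_eq (hR : IsRTrivial M) {a b w : M} (h : a * b * w = a) :
    a * b = a := by
  refine (hR a (a * b) ?_).symm
  ext z
  constructor
  · rintro ⟨s, rfl⟩
    exact ⟨w * s, by rw [← mul_assoc, h]⟩
  · rintro ⟨s, rfl⟩
    exact ⟨b * s, (mul_assoc a b s).symm⟩

theorem mul_eq_of_mul_pow_eq (hR : IsRTrivial M) {a q : M} {n : ℕ} (hn : n ≠ 0)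
    (h : a * q ^ n = a) : a * q = a :=
  hR.mul_eq_of_mul_mul_eq (w := q ^ (n - 1)) <| by
    rw [mul_assoc, ← pow_succ', Nat.sub_add_cancel (Nat.pos_of_ne_zero hn), h]

theorem setOf_mul_subset_pow_iff (hR : IsRTrivial M) {p x : M} {n : ℕ} (hn : n ≠ 0)
    (hx : IsIdempotentElem (x ^ n)) :
    {z : M | ∃ s : M, s * p = z} ⊆ {z : M | ∃ s : M, s * x ^ n = z} ↔ p * x = p := by
  rw [setOf_mul_subset_iff hx]
  exact ⟨hR.mul_eq_of_mul_pow_eq hn, fun h => mul_pow_eq_self_of_mul_eq h n⟩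

theorem pow_mul_eq_self (hR : IsRTrivial M) {x : M} {n : ℕ} (hn : n ≠ 0)
    (hx : IsIdempotentElem (x ^ n)) : x ^ n * x = x ^ n :=
  hR.mul_eq_of_mul_pow_eq hn hx.eq

end IsRTrivial

end

theorem rtrivial_is_weaklyOrdered_general (M : Type*) [Monoid M]
    (hR : ∀ a b : M, {z : M | ∃ s : M, a * s = z} = {z : M | ∃ s : M, b * s = z} → a = b)
    (ω : M → ℕ) (hω : ∀ x : M, 0 < ω x) (hωidem : ∀ x : M, x ^ ω x * x ^ ω x = x ^ ω x)
    (E : M → M) (hE : ∀ u : M, u * E u = u)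
    (hEmax : ∀ u s : M, u * s = u → (∃ w : M, E u * w = s) → E u = s) :
    -- `C x := {z | ∃ s, s * x ^ ω x = z}` and `D u := C (E u)`
    (∀ u v : M,
      -- axiom 1: `C (u * v)` is the join of `C u` and `C v` in `L`
      {z : M | ∃ s : M, s * (u * v) ^ ω (u * v) = z} ⊆ {z : M | ∃ s : M, s * u ^ ω u = z} ∧
      {z : M | ∃ s : M, s * (u * v) ^ ω (u * v) = z} ⊆ {z : M | ∃ s : M, s * v ^ ω v = z} ∧
      ∀ g : M, g * g = g →
        {z : M | ∃ s : M, s * g = z} ⊆ {z : M | ∃ s : M, s * u ^ ω u = z} →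
        {z : M | ∃ s : M, s * g = z} ⊆ {z : M | ∃ s : M, s * v ^ ω v = z} →
        {z : M | ∃ s : M, s * g = z} ⊆ {z : M | ∃ s : M, s * (u * v) ^ ω (u * v) = z}) ∧
    -- axiom 2: `C` is surjective onto `L`
    (∀ g : M, g * g = g →
      ∃ x : M, {z : M | ∃ s : M, s * x ^ ω x = z} = {z : M | ∃ s : M, s * g = z}) ∧
    -- axiom 3: `u * v ≤ u` implies `C v ⪯ D u`
    (∀ u v : M, (∃ w : M, u * v * w = u) →
      {z : M | ∃ s : M, s * (E u) ^ ω (E u) = z} ⊆ {z : M | ∃ s : M, s * v ^ ω v = z}) ∧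
    -- axiom 4: `C v ⪯ D u` implies `u * v = u`
    (∀ u v : M,
      {z : M | ∃ s : M, s * (E u) ^ ω (E u) = z} ⊆ {z : M | ∃ s : M, s * v ^ ω v = z} →
      u * v = u) := by
  replace hR : IsRTrivial M := hR
  have hC : ∀ p x : M, {z : M | ∃ s : M, s * p = z} ⊆ {z : M | ∃ s : M, s * x ^ ω x = z} ↔
      p * x = p := fun p x => hR.setOf_mul_subset_pow_iff (hω x).ne' (hωidem x)
  have hD : ∀ u : M, E u ^ ω (E u) = E u := fun u =>
    (isIdempotentElem_of_maximal (hE u) (hEmax u)).pow_eq (hω _).ne'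
  refine ⟨fun u v => ?_,
    fun g hg => ⟨g, by rw [IsIdempotentElem.pow_eq hg (hω g).ne']⟩, ?_, ?_⟩
  · have he : (u * v) ^ ω (u * v) * (u * v) = (u * v) ^ ω (u * v) :=
      hR.pow_mul_eq_self (hω _).ne' (hωidem _)
    have heu : (u * v) ^ ω (u * v) * u = (u * v) ^ ω (u * v) :=
      hR.mul_eq_of_mul_mul_eq (w := v) (by rw [mul_assoc, he])
    refine ⟨(hC _ u).2 heu, (hC _ v).2 (by simpa only [← mul_assoc, heu] using he), ?_⟩
    intro g _ hgu hgv
    rw [hC] at hgu hgv ⊢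
    rw [← mul_assoc, hgu, hgv]
  · rintro u v ⟨w, hw⟩
    rw [hD, hC]
    exact mul_eq_of_maximal (hE u) (hEmax u) (hR.mul_eq_of_mul_mul_eq hw)
  · intro u v h
    rw [hD, hC] at h
    calc u * v = u * E u * v := by rw [hE]
      _ = u := by rw [mul_assoc, h, hE]

/-- Every finite R-trivial monoid is weakly ordered: with `L` the set of left
ideals generated by idempotents ordered by reverse inclusion, `C x = S x^ω`, and
`D u = C (E u)` for `E u` a maximal element of `{s : u * s = u}`, the four axioms
of a weakly ordered monoid hold (the join in `L` being the least upper bound for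
reverse inclusion). -/
theorem rtrivial_is_weaklyOrdered (M : Type*) [Monoid M] [Finite M]
    (hR : ∀ a b : M, {z : M | ∃ s : M, a * s = z} = {z : M | ∃ s : M, b * s = z} → a = b)
    (ω : M → ℕ) (hω : ∀ x : M, 0 < ω x) (hωidem : ∀ x : M, x ^ ω x * x ^ ω x = x ^ ω x)
    (E : M → M) (hE : ∀ u : M, u * E u = u)
    (hEmax : ∀ u s : M, u * s = u → (∃ w : M, E u * w = s) → E u = s) :
    -- `C x := {z | ∃ s, s * x ^ ω x = z}` and `D u := C (E u)`
    (∀ u v : M,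
      -- axiom 1: `C (u * v)` is the join of `C u` and `C v` in `L`
      {z : M | ∃ s : M, s * (u * v) ^ ω (u * v) = z} ⊆ {z : M | ∃ s : M, s * u ^ ω u = z} ∧
      {z : M | ∃ s : M, s * (u * v) ^ ω (u * v) = z} ⊆ {z : M | ∃ s : M, s * v ^ ω v = z} ∧
      ∀ g : M, g * g = g →
        {z : M | ∃ s : M, s * g = z} ⊆ {z : M | ∃ s : M, s * u ^ ω u = z} →
        {z : M | ∃ s : M, s * g = z} ⊆ {z : M | ∃ s : M, s * v ^ ω v = z} →
        {z : M | ∃ s : M, s * g = z} ⊆ {z : M | ∃ s : M, s * (u * v) ^ ω (u * v) = z}) ∧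
    -- axiom 2: `C` is surjective onto `L`
    (∀ g : M, g * g = g →
      ∃ x : M, {z : M | ∃ s : M, s * x ^ ω x = z} = {z : M | ∃ s : M, s * g = z}) ∧
    -- axiom 3: `u * v ≤ u` implies `C v ⪯ D u`
    (∀ u v : M, (∃ w : M, u * v * w = u) →
      {z : M | ∃ s : M, s * (E u) ^ ω (E u) = z} ⊆ {z : M | ∃ s : M, s * v ^ ω v = z}) ∧
    -- axiom 4: `C v ⪯ D u` implies `u * v = u`
    (∀ u v : M,
      {z : M | ∃ s : M, s * (E u) ^ ω (E u) = z} ⊆ {z : M | ∃ s : M, s * v ^ ω v = z} →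
      u * v = u) :=
  rtrivial_is_weaklyOrdered_general M hR ω hω hωidem E hE hEmax
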